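/- Let M = (S, A, s0, p, γ) be a finite discounted MDP without reward and π_E a stochastic policy with S_{M,π_E} = S and π_E(a|s) ≥ π_min' for all (s,a), for a given π_min' > 0. Let ε, δ ∈ (0,1) and H ≥ |S|. Let N i.i.d. trajectories of length H be generated by π_E in M starting at s0; let N(s,a) be the number of trajectories in which state s is visited and, at the first visit to s, action a is played, and N(s) := ∑_a N(s,a). Define π̂(a|s) := max{π_min', N(s,a)/max{1, N(s)}} and r̂(s,a) := log(π̂(a|s)/max_{a'} π̂(a'|s)) if N(s) > 0, and r̂(s,a) := log π_min' if N(s) = 0. If N ≥ 33·log²(8|S||A|/δ) / (ε²·π_min'·p^{min,H}_{M,π_E}), then with probability at least 1−δ, max_{(s,a)} |r̂(s,a) − log(π_E(a|s)/max_{a'} π_E(a'|s))| ≤ ε. -/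

import Mathlib

open scoped ENNReal

open scoped BigOperators
open MeasureTheory

/-- A finite discounted MDP without reward. -/
structure MDP (S A : Type) [Fintype S] [Fintype A] where
  s0 : S
  p : S → A → S → ℝ
  p_nonneg : ∀ s a s', 0 ≤ p s a s'
  p_sum_one : ∀ s a, ∑ s', p s a s' = 1
  disc : ℝ
  disc_nonneg : 0 ≤ disc
  disc_lt_one : disc < 1

section Defs

variable {S A : Type} [Fintype S] [Fintype A] [DecidableEq S] [DecidableEq A]

/-- `π` is a (stochastic) policy: each `π s` is a probability distribution on actions. -/
def IsPolicy (π : S → A → ℝ) : Prop :=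
  (∀ s a, 0 ≤ π s a) ∧ ∀ s, ∑ a, π s a = 1

open Classical in
/-- The stochastic policy induced by a deterministic policy `d`. -/
noncomputable def detPolicy (d : S → A) : S → A → ℝ :=
  fun s a => if a = d s then 1 else 0

/-- The state-transition matrix of a policy. -/
noncomputable def Pmat (M : MDP S A) (π : S → A → ℝ) : Matrix S S ℝ :=
  Matrix.of fun s s' => ∑ a, π s a * M.p s a s'

/-- The value function `V^π(s; p, r)`. -/
noncomputable def Vpi (M : MDP S A) (π : S → A → ℝ) (r : S × A → ℝ) (s : S) : ℝ :=
  ∑' t : ℕ, M.disc ^ t * ((Pmat M π ^ t).mulVec (fun s' => ∑ a, π s' a * r (s', a))) s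

/-- The optimal value function `V*(s; p, r)`. -/
noncomputable def Vstar (M : MDP S A) (r : S × A → ℝ) (s : S) : ℝ :=
  ⨆ π : {π : S → A → ℝ // IsPolicy π}, Vpi M π.1 r s

noncomputable def Qpi (M : MDP S A) (π : S → A → ℝ) (r : S × A → ℝ) (s : S) (a : A) : ℝ :=
  r (s, a) + M.disc * ∑ s', M.p s a s' * Vpi M π r s'

noncomputable def Api (M : MDP S A) (π : S → A → ℝ) (r : S × A → ℝ) (s : S) (a : A) : ℝ :=
  Qpi M π r s a - Vpi M π r s

noncomputable def Qstar (M : MDP S A) (r : S × A → ℝ) (s : S) (a : A) : ℝ :=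
  r (s, a) + M.disc * ∑ s', M.p s a s' * Vstar M r s'

noncomputable def Astar (M : MDP S A) (r : S × A → ℝ) (s : S) (a : A) : ℝ :=
  Qstar M r s a - Vstar M r s

/-- The soft (entropy-regularized) value function `V^π_λ(s; p, r)`. -/
noncomputable def VpiSoft (M : MDP S A) (lam : ℝ) (π : S → A → ℝ) (r : S × A → ℝ) (s : S) : ℝ :=
  ∑' t : ℕ, M.disc ^ t *
    ((Pmat M π ^ t).mulVec
      (fun s' => ∑ a, π s' a * (r (s', a) - lam * Real.log (π s' a)))) s

noncomputable def VstarSoft (M : MDP S A) (lam : ℝ) (r : S × A → ℝ) (s : S) : ℝ :=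
  ⨆ π : {π : S → A → ℝ // IsPolicy π}, VpiSoft M lam π.1 r s

noncomputable def QstarSoft (M : MDP S A) (lam : ℝ) (r : S × A → ℝ) (s : S) (a : A) : ℝ :=
  r (s, a) + M.disc * ∑ s', M.p s a s' * VstarSoft M lam r s'

noncomputable def AstarSoft (M : MDP S A) (lam : ℝ) (r : S × A → ℝ) (s : S) (a : A) : ℝ :=
  QstarSoft M lam r s a - VstarSoft M lam r s

/-- The OPT feasible set `R^{OPT,S̄}_{M,d}` of a deterministic policy `d`. -/
def ROPT (M : MDP S A) (Sbar : Set S) (d : S → A) : Set (S × A → ℝ) :=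
  {r | ∀ s ∈ Sbar, ∀ a, Qstar M r s a ≤ Qstar M r s (d s)}

/-- The MCE feasible set `R^{MCE,S}_{M,π}` (with `S̄ = S`). -/
def RMCE (M : MDP S A) (lam : ℝ) (π : S → A → ℝ) : Set (S × A → ℝ) :=
  {r | ∀ s a, π s a =
      Real.exp (QstarSoft M lam r s a / lam) / ∑ a', Real.exp (QstarSoft M lam r s a' / lam)}

/-- The BIRL feasible set `R^{BIRL,S}_{M,π}` (with `S̄ = S`). -/
def RBIRL (M : MDP S A) (bet : ℝ) (π : S → A → ℝ) : Set (S × A → ℝ) :=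
  {r | ∀ s a, π s a =
      Real.exp (Qstar M r s a / bet) / ∑ a', Real.exp (Qstar M r s a' / bet)}

open Classical in
/-- The matrix `W_{p,π}`. -/
noncomputable def Wmat (M : MDP S A) (π : S → A → ℝ) : Matrix S S ℝ :=
  Matrix.of fun s s' => (if s' = s then (1 : ℝ) else 0) - M.disc * ∑ a, π s a * M.p s a s'

/-- `k_π := |det W_{p,π}|^{-1/|S|}`. -/
noncomputable def kpi (M : MDP S A) (π : S → A → ℝ) : ℝ :=
  |(Wmat M π).det| ^ (-(1 : ℝ) / (Fintype.card S : ℝ))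

/-- `𝒮R^{OPT}_M`. -/
def SROPT (M : MDP S A) (C1 C2 : ℝ) : Set (S × A → ℝ) :=
  {r | ∀ π : S → A → ℝ, IsPolicy π → (∀ s, Vpi M π r s = Vstar M r s) →
      ∀ s a, |Vpi M π r s| ≤ C1 * kpi M π ∧ |Api M π r s a| ≤ C2}

/-- `𝒮R^{MCE}_M`. -/
def SRMCE (M : MDP S A) (lam C1 C2 : ℝ) : Set (S × A → ℝ) :=
  {r | ∀ s a, |VstarSoft M lam r s| ≤ C1 ∧ |AstarSoft M lam r s a| ≤ C2}

/-- `𝒮R^{BIRL}_M`. -/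
def SRBIRL (M : MDP S A) (C1 C2 : ℝ) : Set (S × A → ℝ) :=
  {r | ∀ s a, |Vstar M r s| ≤ C1 ∧ |Astar M r s a| ≤ C2}

/-- Discounted state occupancy `∑_{t≥0} γ^t P_{M,π}(s_t = s)`. -/
noncomputable def occ (M : MDP S A) (π : S → A → ℝ) (s : S) : ℝ :=
  ∑' t : ℕ, M.disc ^ t * (Pmat M π ^ t) M.s0 s

/-- The support `S_{M,π}` of a policy: states reachable with positive probability. -/
def supp (M : MDP S A) (π : S → A → ℝ) : Set S := {s | 0 < occ M π s}

end Defs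

/-- The unit hypercube `[-1,1]^{S×A}`. -/
def cube (S A : Type) [Fintype S] [Fintype A] : Set (S × A → ℝ) :=
  {r | ∀ sa, |r sa| ≤ 1}

section Prob

variable {S A : Type} [Fintype S] [Fintype A] [DecidableEq S] [DecidableEq A]

open Classical in
/-- Probability of a length-`H` trajectory under policy `π` started at `M.s0`. -/
noncomputable def trajP (M : MDP S A) (π : S → A → ℝ) {H : ℕ} (τ : Fin H → S × A) : ℝ :=
  ∏ t : Fin H,
    (if _h : (t : ℕ) = 0 then (if (τ t).1 = M.s0 then (1 : ℝ) else 0)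
     else M.p (τ ⟨(t : ℕ) - 1, lt_of_le_of_lt (Nat.sub_le _ _) t.isLt⟩).1
              (τ ⟨(t : ℕ) - 1, lt_of_le_of_lt (Nat.sub_le _ _) t.isLt⟩).2 (τ t).1)
    * π (τ t).1 (τ t).2

/-- Probability of a dataset of `N` i.i.d. trajectories. -/
noncomputable def dataP (M : MDP S A) (π : S → A → ℝ) {N H : ℕ}
    (D : Fin N → Fin H → S × A) : ℝ :=
  ∏ i, trajP M π (D i)

/-- Probability of an event over datasets of `N` i.i.d. length-`H` trajectories. -/
noncomputable def PrD (M : MDP S A) (π : S → A → ℝ) {N H : ℕ}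
    (E : Set (Fin N → Fin H → S × A)) : ℝ :=
  ∑ D : Fin N → Fin H → S × A, Set.indicator E (dataP M π) D

/-- Probability that a length-`H` trajectory visits state `s`. -/
noncomputable def visitP (M : MDP S A) (π : S → A → ℝ) (H : ℕ) (s : S) : ℝ :=
  ∑ τ : Fin H → S × A, Set.indicator {τ' : Fin H → S × A | ∃ t, (τ' t).1 = s} (trajP M π) τ

/-- `p^{min,H}_{M,π}`: minimum over support states of the visiting probability. -/
noncomputable def pminH (M : MDP S A) (π : S → A → ℝ) (H : ℕ) : ℝ :=
  ⨅ s : ↥(supp M π), visitP M π H (s : S)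

end Prob

open Classical in
/-- `N(s,a)`: number of trajectories visiting `s` and playing `a` at the first visit. -/
noncomputable def NsaCount {S A : Type} {N H : ℕ} (D : Fin N → Fin H → S × A)
    (s : S) (a : A) : ℕ :=
  (Finset.univ.filter fun i : Fin N =>
    ∃ t : Fin H, (D i t).1 = s ∧ (D i t).2 = a ∧ ∀ t' : Fin H, t' < t → (D i t').1 ≠ s).card

/-- `N(s) = ∑_a N(s,a)`. -/
noncomputable def NsCount {S A : Type} [Fintype A] {N H : ℕ}
    (D : Fin N → Fin H → S × A) (s : S) : ℕ :=
  ∑ a, NsaCount D s a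

/-- The clipped empirical policy `π̂(a|s) = max{π_min', N(s,a)/max{1,N(s)}}`. -/
noncomputable def pihat {S A : Type} [Fintype A] (πmin' : ℝ) {N H : ℕ}
    (D : Fin N → Fin H → S × A) (s : S) (a : A) : ℝ :=
  max πmin' ((NsaCount D s a : ℝ) / max 1 (NsCount D s : ℝ))


/-!
Call a dataset good when each count `N(s)` and `N(s,a)` lies within a factor `1 ± ε/5` of its
mean. The action played at the first visit to `s` is drawn afresh from `π_E(·|s)`, so the first
visit to `s` plays `a` with probability `π_E(a|s)` times the probability of visiting `s`. On the
good event `N(s,a)/N(s)` is therefore within the factor `R = (1 + ε/5)/(1 - ε/5)` of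
`π_E(a|s)`; clipping at `π_min' ≤ π_E(a|s)` keeps this, passing to `log (x / max x)` at most
doubles the error, and `2 log R ≤ ε`.

Each count is binomial with success probability at least `π_min' · p^{min,H}`, which is positive
because a state in the support is reached within `|S| - 1` steps. A multiplicative Chernoff
bound and a union bound over the `|S| + |S||A|` counts bound the probability of a bad dataset
by `δ`.
-/

section Mass

variable {α : Type*} [Fintype α]

noncomputable def mass (w : α → ℝ) (E : Set α) : ℝ :=
  ∑ x, E.indicator w x

variable {w : α → ℝ}

lemma mass_nonneg (hw : 0 ≤ w) (E : Set α) : 0 ≤ mass w E :=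
  Finset.sum_nonneg fun x _ => Set.indicator_nonneg (fun y _ => hw y) x

lemma mass_mono (hw : 0 ≤ w) {E F : Set α} (h : E ⊆ F) : mass w E ≤ mass w F :=
  Finset.sum_le_sum fun x _ => Set.indicator_le_indicator_of_subset h hw x

lemma mass_le_one (hw : 0 ≤ w) (hw1 : ∑ x, w x = 1) (E : Set α) : mass w E ≤ 1 := by
  simpa [mass, hw1] using mass_mono hw (Set.subset_univ E)

lemma mass_compl (hw1 : ∑ x, w x = 1) (E : Set α) : mass w Eᶜ = 1 - mass w E := by
  rw [← hw1, mass, mass, eq_sub_iff_add_eq, ← Finset.sum_add_distrib]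
  exact Finset.sum_congr rfl fun x _ => congrFun (Set.indicator_compl_add_self E w) x

lemma mass_iUnion_le (hw : 0 ≤ w) {ι : Type*} [Fintype ι] (E : ι → Set α) :
    mass w (⋃ i, E i) ≤ ∑ i, mass w (E i) := by
  simp only [mass]
  rw [Finset.sum_comm]
  refine Finset.sum_le_sum fun x _ => ?_
  by_cases hx : x ∈ ⋃ i, E i
  · obtain ⟨i, hi⟩ := Set.mem_iUnion.mp hx
    rw [Set.indicator_of_mem hx, ← Set.indicator_of_mem hi w]
    exact Finset.single_le_sum (f := fun i => (E i).indicator w x)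
      (fun j _ => Set.indicator_nonneg (fun y _ => hw y) x) (Finset.mem_univ i)
  · rw [Set.indicator_of_notMem hx]
    exact Finset.sum_nonneg fun i _ => Set.indicator_nonneg (fun y _ => hw y) x

lemma mass_union_le (hw : 0 ≤ w) (E F : Set α) : mass w (E ∪ F) ≤ mass w E + mass w F := by
  simpa [Set.union_eq_iUnion, add_comm] using mass_iUnion_le hw fun b => cond b E F

end Mass

lemma Fin.sum_pi_snoc {X : Type*} [Fintype X] {m : ℕ} (F : (Fin (m + 1) → X) → ℝ) :
    ∑ τ, F τ = ∑ σ : Fin m → X, ∑ y, F (Fin.snoc σ y) := by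
  rw [← Fintype.sum_equiv (Fin.snocEquiv fun _ => X) _ F (fun _ => rfl), Fintype.sum_prod_type,
    Finset.sum_comm]
  rfl

lemma Real.exp_le_one_add_add_mul_sq {θ : ℝ} (hθ : |θ| ≤ 1 / 5) :
    Real.exp θ ≤ 1 + θ + 3 / 5 * θ ^ 2 := by
  have h := Real.exp_bound (x := θ) (by linarith) (n := 3) (by norm_num)
  norm_num [Finset.sum_range_succ, Nat.factorial] at h
  have hcube : |θ| ^ 3 ≤ θ ^ 2 * (1 / 5) := by
    rw [pow_succ, sq_abs]
    exact mul_le_mul_of_nonneg_left hθ (sq_nonneg θ)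
  linarith [(abs_le.mp h).2, sq_nonneg θ]

section Chernoff

variable {α : Type*} {N : ℕ}

open Classical in
noncomputable def count (E : Set α) (D : Fin N → α) : ℕ :=
  (Finset.univ.filter fun i => D i ∈ E).card

lemma count_eq_sum_indicator (E : Set α) (D : Fin N → α) :
    count E D = ∑ i, E.indicator 1 (D i) := by
  classical
  rw [count, Finset.card_filter]
  simp [Set.indicator_apply]

variable [Fintype α] {w : α → ℝ}

noncomputable def countDeviates (w : α → ℝ) (c : ℝ) (E : Set α) : Set (Fin N → α) :=
  {D | c * (N * mass w E) ≤ |(count E D : ℝ) - N * mass w E|}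

lemma sum_prod_mul_exp_count (hw1 : ∑ x, w x = 1) (E : Set α) (θ : ℝ) :
    ∑ D : Fin N → α, (∏ i, w (D i)) * Real.exp (θ * count E D) =
      (1 + mass w E * (Real.exp θ - 1)) ^ N := by
  classical
  have hexp : ∀ D : Fin N → α,
      Real.exp (θ * count E D) = ∏ i, if D i ∈ E then Real.exp θ else 1 := by
    intro D
    rw [Finset.prod_ite, Finset.prod_const_one, mul_one, Finset.prod_const, mul_comm,
      Real.exp_nat_mul]
    rfl
  have hone :
      ∑ x, w x * (if x ∈ E then Real.exp θ else 1) = 1 + mass w E * (Real.exp θ - 1) := by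
    calc ∑ x, w x * (if x ∈ E then Real.exp θ else 1)
        = ∑ x, (w x + E.indicator w x * (Real.exp θ - 1)) := by
          refine Finset.sum_congr rfl fun x _ => ?_
          by_cases hx : x ∈ E <;> simp [hx]
          ring
      _ = 1 + mass w E * (Real.exp θ - 1) := by
          rw [Finset.sum_add_distrib, hw1, mass, Finset.sum_mul]
  rw [← hone, Fintype.sum_pow]
  simp only [hexp, ← Finset.prod_mul_distrib]

lemma mass_prod_le_exp_mul (hw : 0 ≤ w) (hw1 : ∑ x, w x = 1) (E : Set α) (θ x : ℝ) :
    mass (fun D : Fin N → α => ∏ i, w (D i)) {D | θ * x ≤ θ * count E D} ≤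
      Real.exp (-θ * x) * (1 + mass w E * (Real.exp θ - 1)) ^ N := by
  rw [← sum_prod_mul_exp_count hw1, Finset.mul_sum]
  refine Finset.sum_le_sum fun D _ => ?_
  have hD : 0 ≤ ∏ i, w (D i) := Finset.prod_nonneg fun i _ => hw _
  by_cases hmem : D ∈ {D : Fin N → α | θ * x ≤ θ * count E D}
  · rw [Set.indicator_of_mem hmem]
    have hone : 1 ≤ Real.exp (-θ * x) * Real.exp (θ * count E D) := by
      rw [← Real.exp_add]
      exact Real.one_le_exp (by linarith [show θ * x ≤ θ * count E D from hmem])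
    nlinarith
  · rw [Set.indicator_of_notMem hmem]
    positivity

lemma mass_prod_tail_le (hw : 0 ≤ w) (hw1 : ∑ x, w x = 1) (E : Set α) {θ : ℝ}
    (hθ : |θ| ≤ 1 / 5) :
    mass (fun D : Fin N → α => ∏ i, w (D i))
        {D | θ * ((1 + θ) * (N * mass w E)) ≤ θ * count E D} ≤
      Real.exp (-(2 / 5) * θ ^ 2 * (N * mass w E)) := by
  set p := mass w E
  have hp0 : 0 ≤ p := mass_nonneg hw E
  have hp1 : p ≤ 1 := mass_le_one hw hw1 E
  have hbase : 0 ≤ 1 + p * (Real.exp θ - 1) := by nlinarith [Real.exp_pos θ]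
  have hpow : (1 + p * (Real.exp θ - 1)) ^ N ≤ Real.exp (N * (p * (Real.exp θ - 1))) := by
    rw [Real.exp_nat_mul]
    exact pow_le_pow_left₀ hbase (by linarith [Real.add_one_le_exp (p * (Real.exp θ - 1))]) N
  have hNp : 0 ≤ (N : ℝ) * p := by positivity
  calc _ ≤ Real.exp (-θ * ((1 + θ) * (N * p))) * (1 + p * (Real.exp θ - 1)) ^ N :=
        mass_prod_le_exp_mul hw hw1 E θ _
    _ ≤ Real.exp (-θ * ((1 + θ) * (N * p))) * Real.exp (N * (p * (Real.exp θ - 1))) := by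
        gcongr
    _ = Real.exp (N * p * (Real.exp θ - 1 - θ - θ ^ 2)) := by
        rw [← Real.exp_add]
        ring_nf
    _ ≤ Real.exp (-(2 / 5) * θ ^ 2 * (N * p)) := by
        refine Real.exp_le_exp.mpr ?_
        nlinarith [Real.exp_le_one_add_add_mul_sq hθ]

lemma mass_countDeviates_le (hw : 0 ≤ w) (hw1 : ∑ x, w x = 1) (E : Set α) {c : ℝ}
    (hc0 : 0 ≤ c) (hc : c ≤ 1 / 5) :
    mass (fun D : Fin N → α => ∏ i, w (D i)) (countDeviates w c E) ≤
      2 * Real.exp (-(2 / 5) * c ^ 2 * (N * mass w E)) := by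
  have hprod : 0 ≤ fun D : Fin N → α => ∏ i, w (D i) :=
    fun D => Finset.prod_nonneg fun i _ => hw _
  have hsub : countDeviates (N := N) w c E ⊆
      {D | c * ((1 + c) * (N * mass w E)) ≤ c * count E D} ∪
        {D | -c * ((1 + -c) * (N * mass w E)) ≤ -c * count E D} := by
    intro D hD
    rcases le_abs'.mp (show c * (N * mass w E) ≤ |(count E D : ℝ) - N * mass w E| from hD)
      with h | h
    · right
      show -c * ((1 + -c) * (N * mass w E)) ≤ -c * count E D
      nlinarith
    · left
      show c * ((1 + c) * (N * mass w E)) ≤ c * count E D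
      nlinarith
  calc _ ≤ _ := (mass_mono hprod hsub).trans (mass_union_le hprod _ _)
    _ ≤ _ := add_le_add (mass_prod_tail_le hw hw1 E (by rwa [abs_of_nonneg hc0]))
        (mass_prod_tail_le hw hw1 E (by rwa [abs_neg, abs_of_nonneg hc0]))
    _ = _ := by rw [neg_sq]; ring

end Chernoff

lemma Matrix.exists_pow_apply_pos_lt_card {n : Type*} [Fintype n] [DecidableEq n]
    {P : Matrix n n ℝ} (hP : ∀ i j, 0 ≤ P i j) {i j : n} {t : ℕ} (h : 0 < (P ^ t) i j) :
    ∃ t' < Fintype.card n, 0 < (P ^ t') i j := by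
  have hPk := Matrix.pow_apply_nonneg hP
  let IsDist (l : n) (m : ℕ) : Prop := 0 < (P ^ m) i l ∧ ∀ k < m, ¬ 0 < (P ^ k) i l
  have hstep : ∀ {k l l'}, 0 < (P ^ k) i l' → 0 < P l' l → 0 < (P ^ (k + 1)) i l :=
    fun {k l l'} h1 h2 => by
      rw [pow_succ, Matrix.mul_apply]
      exact Finset.sum_pos' (fun x _ => mul_nonneg (hPk k i x) (hP x l))
        ⟨l', Finset.mem_univ _, mul_pos h1 h2⟩
  -- a state at distance `m + 1` from `i` is entered from a state at distance `m`
  have hpred : ∀ {l m}, IsDist l (m + 1) → ∃ l', IsDist l' m := by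
    rintro l m ⟨hpos, hmin⟩
    rw [pow_succ, Matrix.mul_apply] at hpos
    obtain ⟨l', -, hl'⟩ :=
      Finset.exists_lt_of_sum_lt (f := fun _ => (0 : ℝ)) (by simpa using hpos)
    have hl'm : 0 < (P ^ m) i l' := pos_of_mul_pos_left hl' (hP l' l)
    exact ⟨l', hl'm, fun k hk hk' =>
      hmin (k + 1) (by omega) (hstep hk' (pos_of_mul_pos_right hl' (hPk m i l')))⟩
  have hex : ∃ m, 0 < (P ^ m) i j := ⟨t, h⟩
  set m := Nat.find hex
  have hdist : ∀ k ≤ m, ∃ l, IsDist l k := fun k hk =>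
    Nat.decreasingInduction (motive := fun k _ => ∃ l, IsDist l k)
      (fun k _ ⟨l, hl⟩ => hpred hl)
      ⟨j, Nat.find_spec hex, fun k hk => Nat.find_min hex hk⟩ hk
  -- the states at distances `0, 1, …, m` are pairwise distinct
  choose f hf using fun k : Fin (m + 1) => hdist k (by omega)
  have hinj : Function.Injective f := by
    intro k k' hkk'
    have h1 := hf k
    have h2 := hf k'
    rw [hkk'] at h1
    by_contra hne
    rcases lt_or_gt_of_ne (Fin.val_ne_of_ne hne) with hlt | hlt
    · exact h2.2 _ hlt h1.1
    · exact h1.2 _ hlt h2.1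
  refine ⟨m, ?_, Nat.find_spec hex⟩
  simpa using Fintype.card_le_of_injective f hinj

def WithinFactor (R x y : ℝ) : Prop :=
  x ≤ y * R ∧ y ≤ x * R

namespace WithinFactor

variable {R x y : ℝ}

lemma abs_log_sub_log_le (h : WithinFactor R x y) (hx : 0 < x) (hy : 0 < y) :
    |Real.log x - Real.log y| ≤ Real.log R := by
  have hR : 0 < R := pos_of_mul_pos_right (hx.trans_le h.1) hy.le
  rw [abs_sub_le_iff]
  constructor
  · linarith [Real.log_le_log hx h.1, Real.log_mul hy.ne' hR.ne']
  · linarith [Real.log_le_log hy h.2, Real.log_mul hx.ne' hR.ne']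

lemma ciSup {ι : Type*} [Finite ι] [Nonempty ι] {f g : ι → ℝ} (hR : 0 ≤ R)
    (h : ∀ i, WithinFactor R (f i) (g i)) : WithinFactor R (⨆ i, f i) (⨆ i, g i) :=
  ⟨ciSup_le fun i => (h i).1.trans
      (mul_le_mul_of_nonneg_right (le_ciSup (Finite.bddAbove_range g) i) hR),
    ciSup_le fun i => (h i).2.trans
      (mul_le_mul_of_nonneg_right (le_ciSup (Finite.bddAbove_range f) i) hR)⟩

lemma max_left {m : ℝ} (h : WithinFactor R x y) (hm : m ≤ y) (hy : 0 ≤ y) (hR : 1 ≤ R) :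
    WithinFactor R (max m x) y :=
  ⟨max_le (hm.trans (le_mul_of_one_le_right hy hR)) h.1,
    h.2.trans (mul_le_mul_of_nonneg_right (le_max_right m x) (zero_le_one.trans hR))⟩

end WithinFactor

lemma abs_log_div_ciSup_sub_le {ι : Type*} [Finite ι] {R : ℝ} {f g : ι → ℝ}
    (hf : ∀ i, 0 < f i) (hg : ∀ i, 0 < g i) (h : ∀ i, WithinFactor R (f i) (g i)) (i : ι) :
    |Real.log (f i / ⨆ j, f j) - Real.log (g i / ⨆ j, g j)| ≤ 2 * Real.log R := by
  have : Nonempty ι := ⟨i⟩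
  have hR : 0 ≤ R := (pos_of_mul_pos_right ((hf i).trans_le (h i).1) (hg i).le).le
  have hF : 0 < ⨆ j, f j := (hf i).trans_le (le_ciSup (Finite.bddAbove_range f) i)
  have hG : 0 < ⨆ j, g j := (hg i).trans_le (le_ciSup (Finite.bddAbove_range g) i)
  have h1 := (h i).abs_log_sub_log_le (hf i) (hg i)
  have h2 := (WithinFactor.ciSup hR h).abs_log_sub_log_le hF hG
  rw [Real.log_div (hf i).ne' hF.ne', Real.log_div (hg i).ne' hG.ne']
  calc _ = |(Real.log (f i) - Real.log (g i)) -
          (Real.log (⨆ j, f j) - Real.log (⨆ j, g j))| := by ring_nf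
    _ ≤ _ := abs_sub _ _
    _ ≤ 2 * Real.log R := by linarith

lemma withinFactor_div_of_abs_sub_lt {x y X Y c : ℝ} (hc0 : 0 < c) (hc1 : c < 1)
    (hx : |x - X| < c * X) (hy : |y - Y| < c * Y) :
    WithinFactor ((1 + c) / (1 - c)) (x / y) (X / Y) := by
  have hX : 0 < X := pos_of_mul_pos_right ((abs_nonneg _).trans_lt hx) hc0.le
  have hY : 0 < Y := pos_of_mul_pos_right ((abs_nonneg _).trans_lt hy) hc0.le
  obtain ⟨hx1, hx2⟩ := abs_sub_lt_iff.mp hx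
  obtain ⟨hy1, hy2⟩ := abs_sub_lt_iff.mp hy
  have hy0 : 0 < y := by nlinarith
  have hx0 : 0 < x := by nlinarith
  have h1c : 0 < 1 - c := by linarith
  constructor
  · rw [div_mul_div_comm, div_le_div_iff₀ hy0 (by positivity)]
    nlinarith
  · rw [div_mul_div_comm, div_le_div_iff₀ hY (by positivity)]
    nlinarith

lemma pos_of_abs_sub_lt_mul {y Y c : ℝ} (hc0 : 0 ≤ c) (hc1 : c < 1) (h : |y - Y| < c * Y) :
    0 < y := by
  have hY : 0 < Y := pos_of_mul_pos_right ((abs_nonneg _).trans_lt h) hc0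
  nlinarith [(abs_sub_lt_iff.mp h).2]

lemma two_mul_log_one_add_div_one_sub_le {ε : ℝ} (hε0 : 0 < ε) (hε1 : ε < 1) :
    2 * Real.log ((1 + ε / 5) / (1 - ε / 5)) ≤ ε := by
  have h1 : 0 < 1 - ε / 5 := by linarith
  have hlog := Real.log_le_sub_one_of_pos (div_pos (by linarith : 0 < 1 + ε / 5) h1)
  rw [div_sub_one h1.ne'] at hlog
  have hfrac : (1 + ε / 5 - (1 - ε / 5)) / (1 - ε / 5) ≤ ε / 2 := by
    rw [div_le_iff₀ h1]
    nlinarith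
  linarith

lemma card_mul_exp_le_of_sample_size {ε δ q S A N : ℝ} (hε : 0 < ε) (hδ0 : 0 < δ)
    (hδ1 : δ < 1) (hS : 1 ≤ S) (hA : 1 ≤ A) (hq : 0 < q)
    (hN : 33 * Real.log (8 * S * A / δ) ^ 2 / (ε ^ 2 * q) ≤ N) :
    (S + S * A) * (2 * Real.exp (-(2 / 5) * (ε / 5) ^ 2 * (N * q))) ≤ δ := by
  set L := Real.log (8 * S * A / δ)
  have hL : 2 ≤ L := by
    rw [Real.le_log_iff_exp_le (by positivity)]
    have he : Real.exp 2 < 8 := by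
      have := Real.exp_one_lt_d9
      rw [show (2 : ℝ) = 1 + 1 by norm_num, Real.exp_add]
      nlinarith [Real.exp_pos 1]
    have h8 : 8 ≤ 8 * S * A / δ := by
      rw [le_div_iff₀ hδ0]
      nlinarith
    linarith
  have hNq : 33 * L ^ 2 ≤ N * (ε ^ 2 * q) := (div_le_iff₀ (by positivity)).mp hN
  have hexpo : L ≤ 2 / 5 * (ε / 5) ^ 2 * (N * q) := by
    nlinarith [mul_le_mul_of_nonneg_left hL (by linarith : (0 : ℝ) ≤ L)]
  calc (S + S * A) * (2 * Real.exp (-(2 / 5) * (ε / 5) ^ 2 * (N * q)))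
      ≤ (S + S * A) * (2 * Real.exp (-L)) := by
        gcongr
        linarith
    _ = (S + S * A) * δ / (4 * S * A) := by
        rw [Real.exp_neg, Real.exp_log (by positivity), inv_div]
        field_simp
        ring
    _ ≤ δ := by
        rw [div_le_iff₀ (by positivity)]
        nlinarith [mul_le_mul_of_nonneg_left hA (by linarith : (0 : ℝ) ≤ S)]

lemma IsPolicy.le_one {S A : Type} [Fintype A] {π : S → A → ℝ} (hπ : IsPolicy π) (s : S)
    (a : A) : π s a ≤ 1 :=
  (Finset.single_le_sum (fun a' _ => hπ.1 s a') (Finset.mem_univ a)).trans (hπ.2 s).le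

lemma Pmat_nonneg {S A : Type} [Fintype S] [Fintype A] (M : MDP S A) {π : S → A → ℝ}
    (hπ : IsPolicy π) (s s' : S) : 0 ≤ Pmat M π s s' :=
  Finset.sum_nonneg fun a _ => mul_nonneg (hπ.1 s a) (M.p_nonneg s a s')

section Trajectories

variable {S A : Type} [Fintype S] [Fintype A] [DecidableEq S] (M : MDP S A) {π : S → A → ℝ}

noncomputable def nextStateProb : {t : ℕ} → (Fin t → S × A) → S → ℝ
  | 0, _, s' => if s' = M.s0 then 1 else 0
  | t + 1, ρ, s' => M.p (ρ (Fin.last t)).1 (ρ (Fin.last t)).2 s'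

lemma sum_nextStateProb_mul {t : ℕ} (ρ : Fin t → S × A) (g : S × A → ℝ) :
    ∑ y : S × A, nextStateProb M ρ y.1 * π y.1 y.2 * g y =
      ∑ s', nextStateProb M ρ s' * ∑ a, π s' a * g (s', a) := by
  simp only [Fintype.sum_prod_type, Finset.mul_sum, mul_assoc]

lemma sum_nextStateProb {t : ℕ} (ρ : Fin t → S × A) : ∑ s', nextStateProb M ρ s' = 1 := by
  cases t with
  | zero => simp [nextStateProb]
  | succ t => exact M.p_sum_one _ _

lemma sum_nextStateProb_mul_policy {t : ℕ} (ρ : Fin t → S × A) (hπ : IsPolicy π) :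
    ∑ y : S × A, nextStateProb M ρ y.1 * π y.1 y.2 = 1 := by
  simpa [hπ.2, sum_nextStateProb] using sum_nextStateProb_mul M (π := π) ρ (fun _ => 1)

lemma trajP_snoc {t : ℕ} (ρ : Fin t → S × A) (y : S × A) :
    trajP M π (Fin.snoc ρ y) = trajP M π ρ * (nextStateProb M ρ y.1 * π y.1 y.2) := by
  unfold trajP
  rw [Fin.prod_univ_castSucc]
  congr 1
  · refine Finset.prod_congr rfl fun i _ => ?_
    have hi : (i : ℕ) - 1 < t := by omega
    simp [Fin.snoc, hi]
  · cases t with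
    | zero => simp [nextStateProb, Fin.snoc]
    | succ t => simp [nextStateProb, Fin.snoc, Fin.last]

lemma trajP_nonneg (hπ : IsPolicy π) {H : ℕ} (τ : Fin H → S × A) : 0 ≤ trajP M π τ := by
  refine Finset.prod_nonneg fun t _ => mul_nonneg ?_ (hπ.1 _ _)
  split_ifs
  all_goals first | exact M.p_nonneg _ _ _ | norm_num

lemma sum_trajP_mul_snoc {t : ℕ} (F : (Fin (t + 1) → S × A) → ℝ) :
    ∑ τ, trajP M π τ * F τ = ∑ σ, trajP M π σ *
      ∑ y : S × A, nextStateProb M σ y.1 * π y.1 y.2 * F (Fin.snoc σ y) := by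
  rw [Fin.sum_pi_snoc]
  simp only [trajP_snoc, Finset.mul_sum, mul_assoc]

lemma sum_trajP_mul_init (hπ : IsPolicy π) {H : ℕ} (G : (Fin H → S × A) → ℝ) :
    ∑ τ : Fin (H + 1) → S × A, trajP M π τ * G (Fin.init τ) =
      ∑ σ, trajP M π σ * G σ := by
  rw [sum_trajP_mul_snoc]
  refine Finset.sum_congr rfl fun σ _ => ?_
  simp only [Fin.init_snoc, ← Finset.sum_mul, sum_nextStateProb_mul_policy M σ hπ, one_mul]

lemma sum_trajP (hπ : IsPolicy π) (H : ℕ) : ∑ τ : Fin H → S × A, trajP M π τ = 1 := by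
  induction H with
  | zero => simp [trajP]
  | succ H ih =>
    have h := sum_trajP_mul_init M hπ (fun (_ : Fin H → S × A) => (1 : ℝ))
    simp only [mul_one] at h
    rw [h, ih]

lemma sum_trajP_mul_prefix (hπ : IsPolicy π) {m H : ℕ} (hmH : m ≤ H)
    (G : (Fin m → S × A) → ℝ) :
    ∑ τ : Fin H → S × A, trajP M π τ * G (fun j => τ (Fin.castLE hmH j)) =
      ∑ σ, trajP M π σ * G σ := by
  induction H, hmH using Nat.le_induction with
  | base => rfl
  | succ H hmH ih => exact (sum_trajP_mul_init M hπ _).trans ih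

lemma dataP_nonneg (hπ : IsPolicy π) {N H : ℕ} : 0 ≤ dataP M π (N := N) (H := H) :=
  fun D => Finset.prod_nonneg fun i _ => trajP_nonneg M hπ (D i)

lemma sum_dataP (hπ : IsPolicy π) (N H : ℕ) :
    ∑ D : Fin N → Fin H → S × A, dataP M π D = 1 := by
  simp only [dataP]
  rw [← Fintype.sum_pow, sum_trajP M hπ, one_pow]

lemma PrD_iUnion_countDeviates_le (hπ : IsPolicy π) {N H : ℕ} {ι : Type*} [Fintype ι]
    (E : ι → Set (Fin H → S × A)) {c q : ℝ} (hc0 : 0 ≤ c) (hc : c ≤ 1 / 5)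
    (hq : ∀ i, q ≤ mass (trajP M π) (E i)) :
    PrD M π (⋃ i, countDeviates (N := N) (trajP M π) c (E i)) ≤
      Fintype.card ι * (2 * Real.exp (-(2 / 5) * c ^ 2 * (N * q))) := by
  calc PrD M π _ ≤ ∑ i, PrD M π (countDeviates (trajP M π) c (E i)) :=
        mass_iUnion_le (dataP_nonneg M hπ) _
    _ ≤ ∑ _i : ι, 2 * Real.exp (-(2 / 5) * c ^ 2 * (N * q)) := by
        refine Finset.sum_le_sum fun i _ =>
          (mass_countDeviates_le (trajP_nonneg M hπ) (sum_trajP M hπ H) (E i) hc0 hc).trans ?_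
        have : 2 / 5 * c ^ 2 * (N * q) ≤ 2 / 5 * c ^ 2 * (N * mass (trajP M π) (E i)) := by
          gcongr
          exact hq i
        exact mul_le_mul_of_nonneg_left (Real.exp_le_exp.mpr (by linarith)) zero_le_two
    _ = _ := by simp

end Trajectories

section Visits

variable {S A : Type} [Fintype S] [Fintype A] [DecidableEq S] (M : MDP S A)

noncomputable def stateProb (π : S → A → ℝ) (t : ℕ) (s : S) : ℝ :=
  ∑ ρ : Fin t → S × A, trajP M π ρ * nextStateProb M ρ s

variable {π : S → A → ℝ}

lemma stateProb_eq_pow (t : ℕ) (s : S) : stateProb M π t s = (Pmat M π ^ t) M.s0 s := by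
  induction t generalizing s with
  | zero => simp [stateProb, trajP, nextStateProb, Matrix.one_apply, eq_comm]
  | succ t ih =>
    calc stateProb M π (t + 1) s
        = ∑ τ : Fin (t + 1) → S × A,
            trajP M π τ * M.p (τ (Fin.last t)).1 (τ (Fin.last t)).2 s := rfl
      _ = ∑ σ, trajP M π σ * ∑ s', nextStateProb M σ s' * Pmat M π s' s := by
        rw [sum_trajP_mul_snoc]
        simp only [Fin.snoc_last, sum_nextStateProb_mul]
        rfl
      _ = ∑ s', stateProb M π t s' * Pmat M π s' s := by
        simp only [stateProb, Finset.mul_sum, Finset.sum_mul, mul_assoc]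
        exact Finset.sum_comm
      _ = (Pmat M π ^ (t + 1)) M.s0 s := by simp only [ih, pow_succ, Matrix.mul_apply]

lemma stateProb_le_visitP (hπ : IsPolicy π) {t H : ℕ} (ht : t < H) (s : S) :
    stateProb M π t s ≤ visitP M π H s := by
  let G (σ : Fin (t + 1) → S × A) : ℝ := if (σ (Fin.last t)).1 = s then 1 else 0
  calc stateProb M π t s = ∑ σ, trajP M π σ * G σ := by
        rw [sum_trajP_mul_snoc]
        simp only [G, Fin.snoc_last, sum_nextStateProb_mul]
        simp [stateProb, hπ.2]
    _ = ∑ τ : Fin H → S × A, trajP M π τ * G (fun j => τ (Fin.castLE ht j)) :=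
        (sum_trajP_mul_prefix M hπ ht G).symm
    _ ≤ visitP M π H s := by
        refine Finset.sum_le_sum fun τ _ => ?_
        by_cases hτ : (τ (Fin.castLE ht (Fin.last t))).1 = s
        · have hmem : τ ∈ {τ' : Fin H → S × A | ∃ u, (τ' u).1 = s} := ⟨_, hτ⟩
          simp [G, hτ, Set.indicator_of_mem hmem]
        · simpa [G, hτ] using Set.indicator_nonneg (fun τ _ => trajP_nonneg M hπ τ) τ

lemma visitP_pos (hπ : IsPolicy π) {H : ℕ} (hH : Fintype.card S ≤ H) {s : S}
    (hs : s ∈ supp M π) : 0 < visitP M π H s := by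
  have hreach : ∃ t, 0 < (Pmat M π ^ t) M.s0 s := by
    by_contra! h0
    have hocc : occ M π s = 0 := by
      simp [occ, fun t => le_antisymm (h0 t) (Matrix.pow_apply_nonneg (Pmat_nonneg M hπ) t _ _)]
    exact hs.ne' hocc
  obtain ⟨t₀, ht₀⟩ := hreach
  obtain ⟨t, ht, hpos⟩ := Matrix.exists_pow_apply_pos_lt_card (Pmat_nonneg M hπ) ht₀
  rw [← stateProb_eq_pow] at hpos
  exact hpos.trans_le (stateProb_le_visitP M hπ (ht.trans_le hH) s)

lemma pminH_le_visitP (H : ℕ) {s : S} (hs : s ∈ supp M π) : pminH M π H ≤ visitP M π H s :=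
  ciInf_le (Finite.bddBelow_range _) (⟨s, hs⟩ : supp M π)

lemma pminH_pos (hπ : IsPolicy π) {H : ℕ} (hH : Fintype.card S ≤ H)
    (hne : (supp M π).Nonempty) : 0 < pminH M π H := by
  have := hne.to_subtype
  obtain ⟨s, hs⟩ := Finite.exists_min fun s : supp M π => visitP M π H s
  exact (visitP_pos M hπ hH s.2).trans_le (le_ciInf hs)

end Visits

section FirstVisit

variable {S A : Type} {H : ℕ}

def visitEvent (s : S) : Set (Fin H → S × A) :=
  {τ | ∃ t, (τ t).1 = s}

def firstActionEvent (s : S) (a : A) : Set (Fin H → S × A) :=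
  {τ | ∃ t, (τ t).1 = s ∧ (τ t).2 = a ∧ ∀ t' < t, (τ t').1 ≠ s}

lemma firstActionEvent_subset_visitEvent (s : S) (a : A) :
    firstActionEvent (H := H) s a ⊆ visitEvent s :=
  fun _ ⟨t, ht, _⟩ => ⟨t, ht⟩

lemma exists_mem_firstActionEvent {s : S} {τ : Fin H → S × A} (h : τ ∈ visitEvent s) :
    ∃ a, τ ∈ firstActionEvent s a := by
  obtain ⟨t, ht, hmin⟩ := wellFounded_lt.has_min {t | (τ t).1 = s} h
  exact ⟨(τ t).2, t, ht, rfl, fun t' h' ht' => hmin t' ht' h'⟩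

lemma eq_of_mem_firstActionEvent {s : S} {a a' : A} {τ : Fin H → S × A}
    (h : τ ∈ firstActionEvent s a) (h' : τ ∈ firstActionEvent s a') : a = a' := by
  obtain ⟨t, ht, rfl, hmin⟩ := h
  obtain ⟨t', ht', rfl, hmin'⟩ := h'
  obtain rfl : t = t' :=
    le_antisymm (not_lt.mp fun h => hmin t' h ht') (not_lt.mp fun h => hmin' t h ht)
  rfl

lemma sum_indicator_firstActionEvent [Fintype A] {β : Type*} [AddCommMonoid β]
    (f : (Fin H → S × A) → β) (s : S) (τ : Fin H → S × A) :
    ∑ a, (firstActionEvent s a).indicator f τ = (visitEvent s).indicator f τ := by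
  by_cases h : τ ∈ visitEvent s
  · obtain ⟨a, ha⟩ := exists_mem_firstActionEvent h
    rw [Finset.sum_eq_single a (fun b _ hb => Set.indicator_of_notMem
        (fun hb' => hb (eq_of_mem_firstActionEvent hb' ha)) _) (by simp),
      Set.indicator_of_mem ha, Set.indicator_of_mem h]
  · rw [Set.indicator_of_notMem h]
    exact Finset.sum_eq_zero fun a _ =>
      Set.indicator_of_notMem (fun ha => h (firstActionEvent_subset_visitEvent s a ha)) _

lemma snoc_mem_firstActionEvent_iff {s : S} {a : A} {σ : Fin H → S × A} {y : S × A} :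
    (Fin.snoc σ y : Fin (H + 1) → S × A) ∈ firstActionEvent s a ↔
      σ ∈ firstActionEvent s a ∨ (σ ∉ visitEvent s ∧ y = (s, a)) := by
  constructor
  · rintro ⟨t, hts, hta, hmin⟩
    induction t using Fin.lastCases with
    | last =>
      simp only [Fin.snoc_last] at hts hta
      refine Or.inr ⟨fun ⟨u, hu⟩ => ?_, Prod.ext hts hta⟩
      exact hmin u.castSucc (Fin.castSucc_lt_last u) (by simpa using hu)
    | cast t =>
      exact Or.inl ⟨t, by simpa using hts, by simpa using hta, fun u hu => by
        simpa using hmin u.castSucc (Fin.castSucc_lt_castSucc_iff.mpr hu)⟩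
  · rintro (⟨t, hts, hta, hmin⟩ | ⟨hσ, rfl⟩)
    · refine ⟨t.castSucc, by simpa using hts, by simpa using hta, fun u hu => ?_⟩
      induction u using Fin.lastCases with
      | last => exact absurd hu (not_lt.mpr (Fin.castSucc_lt_last t).le)
      | cast u => simpa using hmin u (Fin.castSucc_lt_castSucc_iff.mp hu)
    · refine ⟨Fin.last H, by simp, by simp, fun u hu => ?_⟩
      induction u using Fin.lastCases with
      | last => exact absurd hu (lt_irrefl _)
      | cast u => simpa using fun h => hσ ⟨u, h⟩

end FirstVisit

section FirstVisitProb

variable {S A : Type} [Fintype S] [Fintype A] [DecidableEq S] (M : MDP S A) {π : S → A → ℝ}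

lemma sum_trajP_mul_indicator_snoc_firstActionEvent (hπ : IsPolicy π) {H : ℕ} (s : S) (a : A)
    (σ : Fin H → S × A) :
    trajP M π σ * ∑ y : S × A, nextStateProb M σ y.1 * π y.1 y.2 *
        (firstActionEvent s a).indicator 1 (Fin.snoc σ y : Fin (H + 1) → S × A) =
      (firstActionEvent s a).indicator (trajP M π) σ +
        π s a * ((visitEvent s)ᶜ.indicator (trajP M π) σ * nextStateProb M σ s) := by
  classical
  by_cases hfirst : σ ∈ firstActionEvent s a
  · have hvis := firstActionEvent_subset_visitEvent s a hfirst
    simp [Set.indicator_of_mem, snoc_mem_firstActionEvent_iff, hfirst, hvis,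
      sum_nextStateProb_mul_policy M σ hπ]
  by_cases hvis : σ ∈ visitEvent s
  · simp [snoc_mem_firstActionEvent_iff, hfirst, hvis]
  · have hiff : ∀ y : S × A,
        (Fin.snoc σ y : Fin (H + 1) → S × A) ∈ firstActionEvent s a ↔ y = (s, a) := by
      intro y
      rw [snoc_mem_firstActionEvent_iff]
      simp [hfirst, hvis]
    simp only [Set.indicator_apply, hiff]
    simp [hfirst, hvis]
    ring

lemma mass_firstActionEvent (hπ : IsPolicy π) (H : ℕ) (s : S) (a : A) :
    mass (trajP M π) (firstActionEvent (H := H) s a) = π s a * visitP M π H s := by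
  -- one more step adds the trajectories whose first visit to `s` is the new last step, and its
  -- action is drawn from `π s`; so the dependence on `a` stays a factor `π s a`
  obtain ⟨K, hK⟩ :
      ∃ K, ∀ a, mass (trajP M π) (firstActionEvent (H := H) s a) = π s a * K := by
    induction H with
    | zero => exact ⟨0, fun a => by simp [mass, firstActionEvent]⟩
    | succ H ih =>
      obtain ⟨K, hK⟩ := ih
      refine ⟨K + ∑ σ : Fin H → S × A,
        (visitEvent s)ᶜ.indicator (trajP M π) σ * nextStateProb M σ s, fun a => ?_⟩
      calc mass (trajP M π) (firstActionEvent s a)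
          = ∑ τ, trajP M π τ * (firstActionEvent s a).indicator 1 τ := by
            refine Finset.sum_congr rfl fun τ _ => ?_
            by_cases h : τ ∈ firstActionEvent s a <;> simp [h]
        _ = _ := by
            rw [sum_trajP_mul_snoc]
            simp only [sum_trajP_mul_indicator_snoc_firstActionEvent M hπ, Finset.sum_add_distrib,
              ← Finset.mul_sum]
            rw [← mass, hK]
            ring
  have hvisit : visitP M π H s = K := by
    calc visitP M π H s = ∑ a, mass (trajP M π) (firstActionEvent (H := H) s a) := by
          simp only [mass]
          rw [Finset.sum_comm]
          simp only [sum_indicator_firstActionEvent]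
          rfl
      _ = K := by simp only [hK, ← Finset.sum_mul, hπ.2, one_mul]
  rw [hK, hvisit]

end FirstVisitProb

section Counts

variable {S A : Type} {N H : ℕ}

lemma NsaCount_eq_count (D : Fin N → Fin H → S × A) (s : S) (a : A) :
    NsaCount D s a = count (firstActionEvent s a) D := by
  unfold NsaCount count
  congr

lemma NsCount_eq_count [Fintype A] (D : Fin N → Fin H → S × A) (s : S) :
    NsCount D s = count (visitEvent s) D := by
  simp only [NsCount, NsaCount_eq_count, count_eq_sum_indicator]
  rw [Finset.sum_comm]
  simp only [sum_indicator_firstActionEvent]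

variable [Fintype S] [Fintype A] [DecidableEq S] (M : MDP S A) {π : S → A → ℝ} {c : ℝ}
  {D : Fin N → Fin H → S × A} {s : S}

lemma abs_NsCount_sub_lt (hD : D ∉ countDeviates (trajP M π) c (visitEvent s)) :
    |(NsCount D s : ℝ) - N * visitP M π H s| < c * (N * visitP M π H s) := by
  rw [NsCount_eq_count]
  exact not_le.mp hD

lemma abs_NsaCount_sub_lt (hπ : IsPolicy π) {a : A}
    (hD : D ∉ countDeviates (trajP M π) c (firstActionEvent s a)) :
    |(NsaCount D s a : ℝ) - N * (π s a * visitP M π H s)| <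
      c * (N * (π s a * visitP M π H s)) := by
  rw [NsaCount_eq_count, ← mass_firstActionEvent M hπ H s a]
  exact not_le.mp hD

end Counts

section Estimate

variable {S A : Type} [Fintype A] {N H : ℕ} {πmin' c v : ℝ} {q : A → ℝ}
  {D : Fin N → Fin H → S × A} {s : S}

lemma withinFactor_pihat (hc0 : 0 < c) (hc1 : c < 1) (hmin : 0 ≤ πmin')
    (hq : ∀ a, πmin' ≤ q a) (hNs : |(NsCount D s : ℝ) - N * v| < c * (N * v))
    (hNsa : ∀ a, |(NsaCount D s a : ℝ) - N * (q a * v)| < c * (N * (q a * v))) (a : A) :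
    WithinFactor ((1 + c) / (1 - c)) (pihat πmin' D s a) (q a) := by
  have hNv : 0 < N * v := pos_of_mul_pos_right ((abs_nonneg _).trans_lt hNs) hc0.le
  have hNs1 : (1 : ℝ) ≤ NsCount D s :=
    Nat.one_le_cast.mpr (Nat.cast_pos.mp (pos_of_abs_sub_lt_mul hc0.le hc1 hNs))
  have hratio := withinFactor_div_of_abs_sub_lt hc0 hc1 (hNsa a) hNs
  rw [mul_comm (q a) v, ← mul_assoc, mul_div_cancel_left₀ _ hNv.ne'] at hratio
  rw [pihat, max_eq_right hNs1]
  exact hratio.max_left (hq a) (hmin.trans (hq a)) ((one_le_div (by linarith)).mpr (by linarith))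

lemma abs_log_estimate_sub_le (hc0 : 0 < c) (hc1 : c < 1) (hmin : 0 < πmin')
    (hq : ∀ a, πmin' ≤ q a) (hNs : |(NsCount D s : ℝ) - N * v| < c * (N * v))
    (hNsa : ∀ a, |(NsaCount D s a : ℝ) - N * (q a * v)| < c * (N * (q a * v))) (a : A) :
    |(if 0 < NsCount D s then Real.log (pihat πmin' D s a / ⨆ a', pihat πmin' D s a')
        else Real.log πmin') - Real.log (q a / ⨆ a', q a')| ≤
      2 * Real.log ((1 + c) / (1 - c)) := by
  rw [if_pos (Nat.cast_pos.mp (pos_of_abs_sub_lt_mul hc0.le hc1 hNs))]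
  exact abs_log_div_ciSup_sub_le (fun a => hmin.trans_le (le_max_left _ _))
    (fun a => hmin.trans_le (hq a)) (withinFactor_pihat hc0 hc1 hmin.le hq hNs hNsa) a

end Estimate

theorem statement13_general {S A : Type} [Fintype S] [Fintype A] [DecidableEq S]
    [Nonempty A]
    (M : MDP S A) (πE : S → A → ℝ) (hπE : IsPolicy πE) (hsupp : supp M πE = Set.univ)
    (πmin' : ℝ) (hπmin' : 0 < πmin') (hlb : ∀ s a, πmin' ≤ πE s a)
    (ε δ : ℝ) (hε : ε ∈ Set.Ioo (0 : ℝ) 1) (hδ : δ ∈ Set.Ioo (0 : ℝ) 1)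
    (N H : ℕ) (hH : Fintype.card S ≤ H)
    (hN : 33 * Real.log (8 * (Fintype.card S : ℝ) * (Fintype.card A : ℝ) / δ) ^ 2 /
        (ε ^ 2 * πmin' * pminH M πE H) ≤ (N : ℝ)) :
    1 - δ ≤ PrD M πE {D : Fin N → Fin H → S × A |
      ∀ s a,
        |(if 0 < NsCount D s then Real.log (pihat πmin' D s a / ⨆ a', pihat πmin' D s a')
          else Real.log πmin') - Real.log (πE s a / ⨆ a', πE s a')| ≤ ε} := by
  obtain ⟨hε0, hε1⟩ := hε
  obtain ⟨hδ0, hδ1⟩ := hδ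
  have : Nonempty S := ⟨M.s0⟩
  set pm := pminH M πE H
  have hpm : 0 < pm := pminH_pos M hπE hH (hsupp ▸ Set.univ_nonempty)
  have hvisit : ∀ s, pm ≤ visitP M πE H s :=
    fun s => pminH_le_visitP M H (hsupp ▸ Set.mem_univ s)
  let E : S ⊕ S × A → Set (Fin H → S × A) :=
    Sum.elim visitEvent fun sa => firstActionEvent sa.1 sa.2
  have hE : ∀ i, πmin' * pm ≤ mass (trajP M πE) (E i) := by
    rintro (s | ⟨s, a⟩)
    · have h1 : πmin' ≤ 1 := (hlb M.s0 (Classical.arbitrary A)).trans (hπE.le_one _ _)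
      exact (mul_le_of_le_one_left hpm.le h1).trans (hvisit s)
    · exact (mass_firstActionEvent M hπE H s a).symm ▸
        mul_le_mul (hlb s a) (hvisit s) hpm.le (hπE.1 s a)
  set Bad := ⋃ i, countDeviates (N := N) (trajP M πE) (ε / 5) (E i)
  have hBad : PrD M πE Bad ≤ δ := by
    rw [mul_assoc (ε ^ 2)] at hN
    refine (PrD_iUnion_countDeviates_le M hπE E (by positivity) (by linarith) hE).trans ?_
    simpa [Fintype.card_sum, Fintype.card_prod] using
      card_mul_exp_le_of_sample_size hε0 hδ0 hδ1 (Nat.one_le_cast.mpr Fintype.card_pos)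
        (Nat.one_le_cast.mpr Fintype.card_pos) (by positivity) hN
  calc 1 - δ ≤ 1 - PrD M πE Bad := by linarith
    _ = PrD M πE Badᶜ := (mass_compl (sum_dataP M hπE N H) Bad).symm
    _ ≤ _ := mass_mono (dataP_nonneg M hπE) ?_
  intro D hD s a
  simp only [Bad, Set.mem_compl_iff, Set.mem_iUnion, not_exists] at hD
  exact (abs_log_estimate_sub_le (by positivity) (by linarith) hπmin' (hlb s)
    (abs_NsCount_sub_lt M (hD (.inl s))) (fun a => abs_NsaCount_sub_lt M hπE (hD (.inr (s, a))))
    a).trans (two_mul_log_one_add_div_one_sub_le hε0 hε1)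

/-- sample complexity of estimating the BIRL reward centroid. -/
theorem statement13 {S A : Type} [Fintype S] [Fintype A] [DecidableEq S] [DecidableEq A]
    [Nonempty A]
    (M : MDP S A) (πE : S → A → ℝ) (hπE : IsPolicy πE) (hsupp : supp M πE = Set.univ)
    (πmin' : ℝ) (hπmin' : 0 < πmin') (hlb : ∀ s a, πmin' ≤ πE s a)
    (ε δ : ℝ) (hε : ε ∈ Set.Ioo (0 : ℝ) 1) (hδ : δ ∈ Set.Ioo (0 : ℝ) 1)
    (N H : ℕ) (hH : Fintype.card S ≤ H)
    (hN : 33 * Real.log (8 * (Fintype.card S : ℝ) * (Fintype.card A : ℝ) / δ) ^ 2 /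
        (ε ^ 2 * πmin' * pminH M πE H) ≤ (N : ℝ)) :
    1 - δ ≤ PrD M πE {D : Fin N → Fin H → S × A |
      ∀ s a,
        |(if 0 < NsCount D s then Real.log (pihat πmin' D s a / ⨆ a', pihat πmin' D s a')
          else Real.log πmin') - Real.log (πE s a / ⨆ a', πE s a')| ≤ ε} :=
  statement13_general M πE hπE hsupp πmin' hπmin' hlb ε δ hε hδ N H hH hN
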